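/- arXiv:2508.20842 — 9 statements merged into one kernel-verified Lean document; each statement's English description precedes it below -/
import Mathlib

section
/- Let R be a (not necessarily unital) *-ring such that for every x ∈ R there exist a positive integer n and a projection e ∈ R with {y ∈ R : xⁿy = 0} = {er : r ∈ R}. Then R has a multiplicative identity element. -/
/-- `pow1 x n = x ^ (n + 1)`; as `n` ranges over `ℕ`, `pow1 x n` ranges over all
positive-integer powers of `x` (available even when the ring has no unity). -/
def pow1 {R : Type*} [NonUnitalRing R] (x : R) : ℕ → R
  | 0 => x
  | n + 1 => pow1 x n * x

/-- An element of a `*`-ring is a *projection* if it is self-adjoint and idempotent. -/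
def IsProjection {R : Type*} [NonUnitalRing R] [StarRing R] (e : R) : Prop :=
  star e = e ∧ e * e = e

/-- `e` is a generalized right projection of `x`: `e` is a projection and there is a
positive integer `n + 1` with `xⁿ⁺¹e = xⁿ⁺¹` and `xⁿ⁺¹y = 0 → ey = 0` for all `y`. -/
def IsGRP {R : Type*} [NonUnitalRing R] [StarRing R] (x e : R) : Prop :=
  IsProjection e ∧ ∃ n : ℕ, pow1 x n * e = pow1 x n ∧
    ∀ y : R, pow1 x n * y = 0 → e * y = 0

/-- A `*`-ring is a generalized Rickart `*`-ring if for every `x` there are a positive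
integer and a projection `g` such that the right annihilator of that power of `x` is `gR`. -/
def IsGenRickart (R : Type*) [NonUnitalRing R] [StarRing R] : Prop :=
  ∀ x : R, ∃ n : ℕ, ∃ g : R, IsProjection g ∧
    ∀ y : R, (pow1 x n * y = 0 ↔ ∃ r : R, y = g * r)

/-- A `*`-ring is a generalized weakly Rickart `*`-ring if every element has a
generalized right projection. -/
def IsGenWeaklyRickart (R : Type*) [NonUnitalRing R] [StarRing R] : Prop :=
  ∀ x : R, ∃ e : R, IsGRP x e

/-- If in a (not necessarily unital) `*`-ring every element has some
positive power whose right annihilator is generated by a projection, then the ring has a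
multiplicative identity element. -/
theorem genRickart_has_unity {R : Type*} [NonUnitalRing R] [StarRing R]
    (h : ∀ x : R, ∃ n : ℕ, ∃ e : R, IsProjection e ∧
      ∀ y : R, (pow1 x n * y = 0 ↔ ∃ r : R, y = e * r)) :
    ∃ u : R, ∀ x : R, u * x = x ∧ x * u = x := by
  obtain ⟨n, e, ⟨hse, hee⟩, he⟩ := h 0
  have hpow : pow1 (0 : R) n = 0 := by
    induction n with
    | zero => rfl
    | succ k ih => simp [pow1, ih]
  have hleft : ∀ x : R, e * x = x := by
    intro x
    obtain ⟨r, hr⟩ := (he x).mp (by rw [hpow, zero_mul])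
    rw [hr, ← mul_assoc, hee]
  refine ⟨e, fun x => ⟨hleft x, ?_⟩⟩
  have := congrArg star (hleft (star x))
  rwa [star_mul, star_star, hse] at this
end

section
/- A (not necessarily unital) *-ring R is a generalized Rickart *-ring if and only if R has a unity element and for every x ∈ R there exist a positive integer n and a projection e ∈ R such that {y ∈ R : xⁿy = 0} = {y ∈ R : ey = 0}. -/
lemma pow1_zero' {R : Type*} [NonUnitalRing R] (n : ℕ) : pow1 (0 : R) n = 0 := by
  induction n with
  | zero => rfl
  | succ k ih => simp [pow1, ih]

/-- A (not necessarily unital) `*`-ring is a generalized Rickart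
`*`-ring iff it has a unity element and for each `x` there are a positive integer power
of `x` and a projection `e` with the same right annihilator. -/
theorem genRickart_iff_unity_and_ann {R : Type*} [NonUnitalRing R] [StarRing R] :
    IsGenRickart R ↔
      ((∃ u : R, ∀ x : R, u * x = x ∧ x * u = x) ∧
        ∀ x : R, ∃ n : ℕ, ∃ e : R, IsProjection e ∧
          ∀ y : R, (pow1 x n * y = 0 ↔ e * y = 0)) := by
  constructor
  · intro h
    obtain ⟨n0, g, ⟨hgs, hgi⟩, hg⟩ := h 0
    have hrange : ∀ y : R, ∃ r : R, y = g * r := by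
      intro y
      exact (hg y).mp (by rw [pow1_zero', zero_mul])
    have hleft : ∀ y : R, g * y = y := by
      intro y
      obtain ⟨r, hr⟩ := hrange y
      rw [hr, ← mul_assoc, hgi]
    have hright : ∀ y : R, y * g = y := by
      intro y
      calc y * g = star (star g * star y) := by simp
        _ = star (g * star y) := by rw [hgs]
        _ = y := by rw [hleft, star_star]
    refine ⟨⟨g, fun x => ⟨hleft x, hright x⟩⟩, ?_⟩
    intro x
    obtain ⟨n, e, ⟨hes, hei⟩, he⟩ := h x
    refine ⟨n, g - e, ⟨by rw [star_sub, hgs, hes], ?_⟩, ?_⟩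
    · simp only [mul_sub, sub_mul, hgi, hei, hleft e, hright e]
      abel
    · intro y
      rw [he y]
      constructor
      · rintro ⟨r, rfl⟩
        rw [sub_mul, hleft, ← mul_assoc, hei, sub_self]
      · intro hy
        rw [sub_mul, hleft, sub_eq_zero] at hy
        exact ⟨y, hy⟩
  · rintro ⟨⟨u, hu⟩, h⟩
    have hlu : ∀ y : R, star u * y = y := by
      intro y
      calc star u * y = star (star y * u) := by simp
        _ = y := by rw [(hu (star y)).2, star_star]
    have hus : star u = u := by
      have h1 : star u * u = star u := (hu (star u)).2
      rw [hlu u] at h1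
      exact h1.symm
    intro x
    obtain ⟨n, e, ⟨hes, hei⟩, he⟩ := h x
    refine ⟨n, u - e, ⟨by rw [star_sub, hus, hes], ?_⟩, ?_⟩
    · simp only [mul_sub, sub_mul, hei, (hu u).1, (hu e).1, (hu e).2]
      abel
    · intro y
      rw [he y]
      constructor
      · intro hy
        exact ⟨y, by rw [sub_mul, (hu y).1, hy, sub_zero]⟩
      · rintro ⟨r, rfl⟩
        rw [← mul_assoc, mul_sub, (hu e).2, hei, sub_self, zero_mul]
end

section
/- A (not necessarily unital) *-ring R is a generalized Rickart *-ring if and only if R is a generalized weakly Rickart *-ring and has a unity element. -/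
/-- A (not necessarily unital) `*`-ring is a generalized Rickart
`*`-ring iff it is a generalized weakly Rickart `*`-ring with a unity element. -/
theorem genRickart_iff_genWeaklyRickart_unital {R : Type*} [NonUnitalRing R] [StarRing R] :
    IsGenRickart R ↔
      (IsGenWeaklyRickart R ∧ ∃ u : R, ∀ x : R, u * x = x ∧ x * u = x) := by

  constructor
  · intro h
    obtain ⟨n, g, ⟨hg1, hg2⟩, hann⟩ := h 0
    have h0 : pow1 (0 : R) n = 0 := by
      induction n with
      | zero => rfl
      | succ k ih => simp [pow1]
    have hleft : ∀ y : R, g * y = y := by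
      intro y
      obtain ⟨r, hr⟩ := (hann y).mp (by simp [h0])
      rw [hr, ← mul_assoc, hg2]
    have hright : ∀ y : R, y * g = y := by
      intro y
      have h1 := congrArg star (hleft (star y))
      rwa [star_mul, star_star, hg1] at h1
    refine ⟨?_, g, fun x => ⟨hleft x, hright x⟩⟩
    intro x
    obtain ⟨m, e, ⟨he1, he2⟩, hann'⟩ := h x
    have hxe : pow1 x m * e = 0 := (hann' e).mpr ⟨e, he2.symm⟩
    refine ⟨g - e, ⟨by rw [star_sub, hg1, he1], ?_⟩, m, ?_, ?_⟩
    · rw [mul_sub, sub_mul, sub_mul, hg2, he2, hleft e, hright e]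
      abel
    · rw [mul_sub, hright (pow1 x m), hxe, sub_zero]
    · intro y hy
      obtain ⟨r, hr⟩ := (hann' y).mp hy
      rw [hr, sub_mul, ← mul_assoc, ← mul_assoc, hleft e, he2, sub_self]
  · rintro ⟨hw, u, hu⟩
    have hustar : star u = u := by
      have l : ∀ y : R, star u * y = y := by
        intro y
        have h1 := congrArg star ((hu (star y)).2)
        rwa [star_mul, star_star] at h1
      have h2 := (hu (star u)).2
      rw [l u] at h2
      exact h2.symm
    intro x
    obtain ⟨e, ⟨he1, he2⟩, n, hxe, hann⟩ := hw x
    refine ⟨n, u - e, ⟨by rw [star_sub, hustar, he1], ?_⟩, fun y => ⟨?_, ?_⟩⟩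
    · rw [mul_sub, sub_mul, sub_mul, (hu u).1, (hu e).1, (hu e).2, he2]
      abel
    · intro hy
      refine ⟨y, ?_⟩
      rw [sub_mul, (hu y).1, hann y hy, sub_zero]
    · rintro ⟨r, rfl⟩
      rw [← mul_assoc, mul_sub, (hu (pow1 x n)).2, hxe, sub_self, zero_mul]
end

section
/- Let R be a generalized weakly Rickart *-ring and let x lie in the center of R. Then x has a generalized right projection e that lies in the center of R; in particular, the center of R is a generalized weakly Rickart *-ring. -/
/-- In a generalized weakly Rickart `*`-ring, every central element has
a generalized right projection lying in the center; in particular the center is itself a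
generalized weakly Rickart `*`-ring. -/
theorem center_genWeaklyRickart {R : Type*} [NonUnitalRing R] [StarRing R]
    (h : IsGenWeaklyRickart R) :
    (∀ x : R, (∀ r : R, x * r = r * x) →
      ∃ e : R, IsGRP x e ∧ ∀ r : R, e * r = r * e) ∧
    (∀ x : R, (∀ r : R, x * r = r * x) →
      ∃ e : R, (∀ r : R, e * r = r * e) ∧ IsProjection e ∧
        ∃ n : ℕ, pow1 x n * e = pow1 x n ∧
          ∀ y : R, (∀ r : R, y * r = r * y) → pow1 x n * y = 0 → e * y = 0) := by
  have key : ∀ x : R, (∀ r : R, x * r = r * x) →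
      ∃ e : R, IsGRP x e ∧ ∀ r : R, e * r = r * e := by
    intro x hx
    obtain ⟨e, ⟨hes, he2⟩, n, hne, hann⟩ := h x
    have hpow : ∀ r : R, pow1 x n * r = r * pow1 x n := by
      clear hne hann
      induction n with
      | zero => exact hx
      | succ m ih =>
        intro r
        show pow1 x m * x * r = r * (pow1 x m * x)
        rw [mul_assoc, hx r, ← mul_assoc, ih r, mul_assoc]
    have here : ∀ r : R, e * r = e * r * e := by
      intro r
      have h1 : pow1 x n * (e * r) = pow1 x n * r := by
        rw [← mul_assoc, hne]
      have h2 : pow1 x n * (e * r * e) = pow1 x n * r := by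
        rw [show e * r * e = e * (r * e) from mul_assoc _ _ _, ← mul_assoc, hne,
          ← mul_assoc, hpow r, mul_assoc, hne, ← hpow r]
      have h0 : pow1 x n * (e * r - e * r * e) = 0 := by
        rw [mul_sub, h1, h2, sub_self]
      have h3 := hann _ h0
      rw [mul_sub, ← mul_assoc, ← mul_assoc, ← mul_assoc, he2, sub_eq_zero] at h3
      exact h3
    have hcomm : ∀ r : R, e * r = r * e := by
      intro r
      have h4 := congrArg star (here (star r))
      rw [star_mul, star_mul, star_mul, star_star, hes] at h4
      -- h4 : r * e = e * (r * e)
      rw [h4, ← mul_assoc, ← here]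
    exact ⟨e, ⟨⟨hes, he2⟩, n, hne, hann⟩, hcomm⟩
  refine ⟨key, fun x hx => ?_⟩
  obtain ⟨e, ⟨hproj, n, hne, hann⟩, hcomm⟩ := key x hx
  exact ⟨e, hcomm, hproj, n, hne, fun y _ hy => hann y hy⟩
end

section
/- Let R be a generalized weakly Rickart *-ring. Then (1) for each x ∈ R there exists a positive integer n such that {y ∈ R : xⁿy = 0} ∩ {(x*)ⁿr : r ∈ R} = {0}, and (2) the involution of R is weakly proper: for every x ∈ R, xx* = 0 implies xⁿ = 0 for some positive integer n. -/
lemma pow1_succ' {R : Type*} [NonUnitalRing R] (x : R) (n : ℕ) :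
    pow1 x (n + 1) = x * pow1 x n := by
  induction n with
  | zero => rfl
  | succ k ih => show pow1 x (k+1) * x = x * (pow1 x k * x); rw [ih, mul_assoc]

lemma star_pow1 {R : Type*} [NonUnitalRing R] [StarRing R] (x : R) (n : ℕ) :
    star (pow1 x n) = pow1 (star x) n := by
  induction n with
  | zero => rfl
  | succ k ih =>
    show star (pow1 x k * x) = pow1 (star x) k * star x
    rw [star_mul, ih, ← pow1_succ']
    rfl

/-- In a generalized weakly Rickart `*`-ring: (1) for each `x` there is
a positive integer power `xⁿ` with `r(xⁿ) ∩ (x*)ⁿR = {0}`, and (2) the involution is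
weakly proper. -/
theorem genWeaklyRickart_ann_inter_and_weaklyProper {R : Type*} [NonUnitalRing R] [StarRing R]
    (h : IsGenWeaklyRickart R) :
    (∀ x : R, ∃ n : ℕ,
      {y : R | pow1 x n * y = 0} ∩ {y : R | ∃ r : R, y = pow1 (star x) n * r} = {0}) ∧
    (∀ x : R, x * star x = 0 → ∃ n : ℕ, pow1 x n = 0) := by
  constructor
  · intro x
    obtain ⟨e, ⟨hse, _⟩, n, hxe, hann⟩ := h x
    refine ⟨n, ?_⟩
    ext y
    simp only [Set.mem_inter_iff, Set.mem_setOf_eq, Set.mem_singleton_iff]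
    constructor
    · rintro ⟨hy, r, rfl⟩
      have he' : e * pow1 (star x) n = pow1 (star x) n := by
        have := congrArg star hxe
        rwa [star_mul, hse, star_pow1] at this
      have := hann _ hy
      rwa [← mul_assoc, he'] at this
    · rintro rfl
      exact ⟨mul_zero _, 0, (mul_zero _).symm⟩
  · intro x hx
    obtain ⟨e, ⟨hse, _⟩, n, hxe, hann⟩ := h x
    have hpow : pow1 x n * star x = 0 := by
      induction n with
      | zero => exact hx
      | succ k ih =>
        show pow1 x k * x * star x = 0
        rw [mul_assoc, hx, mul_zero]
    have hex : e * star x = 0 := hann _ hpow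
    have hxe0 : x * e = 0 := by
      have := congrArg star hex
      rwa [star_mul, star_star, hse, star_zero] at this
    refine ⟨n, ?_⟩
    cases n with
    | zero => rw [← hxe]; exact hxe0
    | succ k =>
      rw [← hxe]
      show pow1 x k * x * e = 0
      rw [mul_assoc, hxe0, mul_zero]
end

section
/- Let R be a generalized weakly Rickart *-ring and let e be a projection in R. Then the corner eRe = {exe : x ∈ R} is a generalized weakly Rickart *-ring: for every x ∈ eRe there exist a positive integer n and a projection f ∈ eRe such that xⁿf = xⁿ and, for all y ∈ eRe, xⁿy = 0 implies fy = 0. -/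
/-- The corner `eRe` of a generalized weakly Rickart `*`-ring by a
projection `e` is itself a generalized weakly Rickart `*`-ring. -/
theorem corner_genWeaklyRickart {R : Type*} [NonUnitalRing R] [StarRing R]
    (h : IsGenWeaklyRickart R) (e : R) (he : IsProjection e) :
    ∀ x ∈ {z : R | ∃ r : R, z = e * r * e},
      ∃ n : ℕ, ∃ f ∈ {z : R | ∃ r : R, z = e * r * e}, IsProjection f ∧
        pow1 x n * f = pow1 x n ∧
        ∀ y ∈ {z : R | ∃ r : R, z = e * r * e}, pow1 x n * y = 0 → f * y = 0 := by
  rintro x ⟨r, rfl⟩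
  set x := e * r * e with hx
  have hxe : x * e = x := by rw [hx, mul_assoc, he.2]
  obtain ⟨g, ⟨hgs, hgi⟩, n, hxg, hann⟩ := h x
  -- pow1 x n * e = pow1 x n
  have hpe : pow1 x n * e = pow1 x n := by
    induction n with
    | zero => exact hxe
    | succ m ih => show pow1 x m * x * e = pow1 x m * x; rw [mul_assoc, hxe]
  -- g * z = g * (e * z) for all z
  have hge : ∀ z : R, g * z = g * (e * z) := by
    intro z
    have h0 : pow1 x n * (e * z - z) = 0 := by
      rw [mul_sub, ← mul_assoc, hpe, sub_self]
    have := hann _ h0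
    rw [mul_sub, sub_eq_zero] at this
    exact this.symm
  have hgege : g * e * (g * e) = g * e := by
    have := hge (g * e)
    rw [← mul_assoc, ← mul_assoc] at this
    rw [← this, hgi]
  refine ⟨n, e * g * e, ⟨g, rfl⟩, ⟨by rw [star_mul, star_mul, hgs, he.1, mul_assoc], ?_⟩,
    ?_, ?_⟩
  · -- idempotent
    show e * g * e * (e * g * e) = e * g * e
    simp only [mul_assoc]
    rw [← mul_assoc e e, he.2, ← mul_assoc g e, hgege]
  · -- pow1 x n * f = pow1 x n
    calc pow1 x n * (e * g * e) = pow1 x n * g * e := by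
          rw [← mul_assoc, ← mul_assoc, hpe]
      _ = pow1 x n := by rw [hxg, hpe]
  · rintro y ⟨s, rfl⟩ hy
    have hey : e * (e * s * e) = e * s * e := by
      rw [← mul_assoc, ← mul_assoc, he.2]
    have hgy : g * (e * s * e) = 0 := hann _ hy
    calc e * g * e * (e * s * e) = e * (g * (e * (e * s * e))) := by
          simp only [mul_assoc]
      _ = 0 := by rw [hey, hgy, mul_zero]
end

section
/- Let R be a generalized weakly Rickart *-ring, let S be a self-adjoint subset of R (s ∈ S implies s* ∈ S), and let x ∈ R commute with every element of S. If e is a generalized right projection of x, then se = ese = es for all s ∈ S. -/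
/-- In a generalized weakly Rickart `*`-ring, if `S` is a self-adjoint
subset, `x` commutes with every element of `S`, and `e` is a generalized right projection
of `x`, then `se = ese = es` for all `s ∈ S`. -/
theorem GRP_commutes_with_selfAdjoint_set {R : Type*} [NonUnitalRing R] [StarRing R]
    (h : IsGenWeaklyRickart R) (S : Set R) (hS : ∀ s ∈ S, star s ∈ S)
    (x : R) (hx : ∀ s ∈ S, x * s = s * x) (e : R) (he : IsGRP x e) :
    ∀ s ∈ S, s * e = e * s * e ∧ e * s * e = e * s := by
  obtain ⟨⟨hestar, _⟩, n, hxe, hann⟩ := he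
  have hpow' : ∀ m : ℕ, ∀ s ∈ S, pow1 x m * s = s * pow1 x m := by
    intro m
    induction m with
    | zero => exact hx
    | succ m ih =>
      intro s hs
      show pow1 x m * x * s = s * (pow1 x m * x)
      rw [mul_assoc, hx s hs, ← mul_assoc, ih s hs, mul_assoc]
  have hpow := hpow' n
  have key : ∀ s ∈ S, e * s * e = e * s := by
    intro s hs
    have h0 : pow1 x n * (s * e - s) = 0 := by
      rw [mul_sub, ← mul_assoc, hpow s hs, mul_assoc, hxe, sub_self]
    have h1 := hann _ h0
    rw [mul_sub, sub_eq_zero, ← mul_assoc] at h1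
    exact h1
  intro s hs
  refine ⟨?_, key s hs⟩
  have h2 := key (star s) (hS s hs)
  have h3 := congrArg star h2
  simp only [star_mul, hestar, star_star, ← mul_assoc] at h3
  rw [h3]
end

section
/- Let R be a generalized weakly Rickart *-ring and let S be a self-adjoint subset of R (s ∈ S implies s* ∈ S). Then the commutant S′ = {x ∈ R : xs = sx for all s ∈ S} is a generalized weakly Rickart *-ring: every x ∈ S′ has a generalized right projection e (in R) with e ∈ S′. -/
/-- In a generalized weakly Rickart `*`-ring, the commutant of a
self-adjoint subset `S` is itself a generalized weakly Rickart `*`-ring: every element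
of `S′` has a generalized right projection lying in `S′`. -/
theorem commutant_genWeaklyRickart {R : Type*} [NonUnitalRing R] [StarRing R]
    (h : IsGenWeaklyRickart R) (S : Set R) (hS : ∀ s ∈ S, star s ∈ S) :
    ∀ x : R, (∀ s ∈ S, x * s = s * x) →
      ∃ e : R, IsGRP x e ∧ ∀ s ∈ S, e * s = s * e := by
  intro x hx
  obtain ⟨e, ⟨⟨hstar, hidem⟩, n, hxe, hann⟩⟩ := h x
  refine ⟨e, ⟨⟨hstar, hidem⟩, n, hxe, hann⟩, ?_⟩
  have hpow : ∀ s ∈ S, pow1 x n * s = s * pow1 x n := by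
    intro s hs
    clear hxe hann
    induction n with
    | zero => exact hx s hs
    | succ m ih =>
      show pow1 x m * x * s = s * (pow1 x m * x)
      rw [mul_assoc, hx s hs, ← mul_assoc, ih, mul_assoc]
  -- key: for any s ∈ S, e * s * e = e * s
  have key : ∀ s ∈ S, e * s * e = e * s := by
    intro s hs
    have h1 : pow1 x n * (s * e - s) = 0 := by
      rw [mul_sub, ← mul_assoc, hpow s hs, mul_assoc, hxe, sub_self]
    have h2 := hann _ h1
    rw [mul_sub, sub_eq_zero, ← mul_assoc] at h2
    exact h2
  intro s hs
  have h3 := key (star s) (hS s hs)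
  have h4 := congrArg star h3
  simp only [star_mul, star_star, hstar] at h4
  -- h4 : e * (s * e) = s * e
  rw [← mul_assoc] at h4
  rw [← h4, key s hs]
end

section
/- Let K be a commutative *-ring with unity that is an integral domain, and let R be a (not necessarily unital) *-algebra over K, i.e. a non-unital ring with involution that is a K-module satisfying λ(ab) = (λa)b = a(λb) and (λa)* = λ*a* for λ ∈ K and a, b ∈ R. If the involution of R is weakly proper (aa* = 0 implies aⁿ = 0 for some positive integer n), then the involution of the unitification R₁ = R ⊕ K — with addition componentwise, multiplication (a,λ)(b,μ) = (ab + μa + λb, λμ), and involution (a,λ)* = (a*, λ*) — is weakly proper. -/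
/-- If a (not necessarily unital) `*`-algebra `R` over an involutory
integral domain `K` has a weakly proper involution, then the involution of the
unitification `R₁ = R ⊕ K` (Mathlib's `Unitization K R`) is weakly proper. -/
theorem unitization_weaklyProper {K R : Type*} [CommRing K] [IsDomain K] [StarRing K]
    [NonUnitalRing R] [StarRing R] [Module K R]
    [IsScalarTower K R R] [SMulCommClass K R R] [StarModule K R]
    (hwp : ∀ a : R, a * star a = 0 → ∃ n : ℕ, pow1 a n = 0) :
    ∀ z : Unitization K R, z * star z = 0 → ∃ n : ℕ, 0 < n ∧ z ^ n = 0 := by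
  intro z hz
  have hfst : z.fst * star z.fst = 0 := by
    have := congrArg (fun x : Unitization K R => x.fst) hz
    simpa using this
  have hf0 : z.fst = 0 := by
    rcases mul_eq_zero.mp hfst with h | h
    · exact h
    · exact star_eq_zero.mp h
  have hzr : z = Unitization.inr z.snd := by
    ext <;> simp [hf0]
  have hsnd : z.snd * star z.snd = 0 := by
    have := congrArg (fun x : Unitization K R => x.snd) hz
    simpa [hf0] using this
  obtain ⟨n, hn⟩ := hwp z.snd hsnd
  refine ⟨n + 1, Nat.succ_pos _, ?_⟩
  have key : ∀ m : ℕ, (Unitization.inr z.snd : Unitization K R) ^ (m + 1)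
      = Unitization.inr (pow1 z.snd m) := by
    intro m
    induction m with
    | zero => simp [pow1]
    | succ k ih => rw [pow_succ, ih, ← Unitization.inr_mul]; rfl
  rw [hzr, key, hn, Unitization.inr_zero]
end
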